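/- Let X and Y be independent random variables, X Gamma-distributed with positive integer shape mX and rate mX/ΩX, Y Gamma-distributed with positive integer shape mY and rate mY/ΩY, where ΩX, ΩY > 0. Let Px, Py, Pth, Λ1, Λ2 be positive reals, set Δ2 := (Λ2·Pth + Λ1·Px)/(Px + Py·Λ2), and assume Py·Λ1 ≤ Pth (equivalently Λ1 ≤ Δ2 ≤ Pth/Py). Then the infinite series below converges absolutely and Pr[ X > (Y − Λ1)/Λ2 and Px·X + Py·Y > Pth ] = Σ_{k=0}^{mX−1} (1/k!)·(mX/(ΩX·Λ2))^k · Σ_{q=0}^{k} C(k,q)·(−Λ1)^{k−q}·e^{mX·Λ1/(ΩX·Λ2)} · ((mY/ΩY)^{mY}/Γ[mY]) · Γ[mY + q, (mY/ΩY + mX/(ΩX·Λ2))·Δ2] · (mY/ΩY + mX/(ΩX·Λ2))^{−(mY+q)} + Σ_{p=0}^{mX−1} (1/p!)·(mX/(ΩX·Px))^p · Σ_{n=0}^{p} C(p,n)·Pth^n·(−Py)^{p−n} · ((mY/ΩY)^{mY}/Γ[mY]) · e^{−mX·Pth/(ΩX·Px)} · Σ_{s=0}^{∞} ((mX·Py/(ΩX·Px))^s/s!)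 · Υ[mY + p + s − n, (mY/ΩY)·Δ2] · (mY/ΩY)^{−(mY+p+s−n)}, where C(·,·) denotes the binomial coefficient. -/

import Mathlib

open MeasureTheory Finset

/-- Lower incomplete gamma function `Υ[s, x] = ∫_0^x t^{s−1} e^{−t} dt`. -/
noncomputable def lowerIncGamma (s x : ℝ) : ℝ :=
  ∫ t in (0 : ℝ)..x, t ^ (s - 1) * Real.exp (-t)

/-- Upper incomplete gamma function `Γ[s, x] = ∫_x^∞ t^{s−1} e^{−t} dt`. -/
noncomputable def upperIncGamma (s x : ℝ) : ℝ :=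
  ∫ t in Set.Ioi x, t ^ (s - 1) * Real.exp (-t)

/-!
Conditioning on `Y = y`, the event is `X > t y` with
`t y = max ((y - Λ1) / Λ2) ((Pth - Py y) / Px)`, and for an integer shape the Gamma tail is the
Erlang sum `P(X > x) = e^{-λx} ∑_{k < mX} (λx)^k / k!`. The maximum switches branches exactly at
`y = Δ2`, and `t ≥ 0` because `Py Λ1 ≤ Pth`. For `y > Δ2` the binomial expansion of `(y - Λ1)^k`
leaves integrals `∫_{Δ2}^∞ y^j e^{-βy} dy`, i.e. upper incomplete gamma values. For `y ≤ Δ2` the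
binomial expansion of `(Pth - Py y)^p` leaves `∫_0^{Δ2} y^j e^{-r y} e^{c y} dy`; expanding
`e^{c y}` in its power series and integrating termwise gives the lower incomplete gamma series,
whose absolute convergence, and the termwise integration, follow from
`0 ≤ Υ[j+1, rΔ] / r^(j+1) ≤ Δ^(j+1)`.
-/

open scoped Nat

section

open Real Set Filter Topology ProbabilityTheory

noncomputable def erlangTail (n : ℕ) (x : ℝ) : ℝ :=
  exp (-x) * ∑ k ∈ range n, x ^ k / k !

lemma hasDerivAt_sum_range_pow_div_factorial (n : ℕ) (x : ℝ) :
    HasDerivAt (fun y : ℝ => ∑ k ∈ range (n + 1), y ^ k / k !) (∑ k ∈ range n, x ^ k / k !) x := by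
  induction n with
  | zero => simpa using hasDerivAt_const x (1 : ℝ)
  | succ n ih =>
    have h := ih.fun_add ((hasDerivAt_pow (n + 1) x).div_const ((n + 1)! : ℝ))
    simp only [sum_range_succ _ (n + 1)]
    refine h.congr_deriv ?_
    rw [sum_range_succ, Nat.factorial_succ]
    push_cast
    field_simp

lemma hasDerivAt_erlangTail_succ (n : ℕ) (x : ℝ) :
    HasDerivAt (erlangTail (n + 1)) (-(x ^ n / n ! * exp (-x))) x := by
  have h := (hasDerivAt_neg x).exp.fun_mul (hasDerivAt_sum_range_pow_div_factorial n x)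
  refine h.congr_deriv ?_
  rw [sum_range_succ]
  ring

lemma tendsto_erlangTail_atTop (n : ℕ) : Tendsto (erlangTail n) atTop (𝓝 0) := by
  have h := tendsto_finsetSum (range n) fun k (_ : k ∈ range n) =>
    (tendsto_pow_mul_exp_neg_atTop_nhds_zero k).div_const (k ! : ℝ)
  simp only [zero_div, sum_const_zero] at h
  refine h.congr fun x => ?_
  rw [erlangTail, mul_sum]
  exact sum_congr rfl fun k _ => by ring

lemma integrableOn_Ioi_pow_mul_exp_neg_and_integral (n : ℕ) {x : ℝ} (hx : 0 ≤ x) :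
    IntegrableOn (fun t => t ^ n * exp (-t)) (Ioi x) ∧
      ∫ t in Ioi x, t ^ n * exp (-t) = n ! * erlangTail (n + 1) x := by
  have hderiv : ∀ t ∈ Ici x, HasDerivAt (fun t => -(n ! * erlangTail (n + 1) t))
      (t ^ n * exp (-t)) t := fun t _ => by
    refine ((hasDerivAt_erlangTail_succ n t).const_mul (n ! : ℝ)).neg.congr_deriv ?_
    field_simp
  have hpos : ∀ t ∈ Ioi x, 0 ≤ t ^ n * exp (-t) := fun t ht => by
    have : 0 ≤ t := hx.trans ht.out.le
    positivity
  have hlim : Tendsto (fun t => -(n ! * erlangTail (n + 1) t)) atTop (𝓝 0) := by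
    simpa using ((tendsto_erlangTail_atTop (n + 1)).const_mul (n ! : ℝ)).neg
  refine ⟨integrableOn_Ioi_deriv_of_nonneg' hderiv hpos hlim, ?_⟩
  rw [integral_Ioi_of_hasDerivAt_of_nonneg' hderiv hpos hlim]
  ring

lemma rpow_natCast_add_one_sub_one (t : ℝ) (n : ℕ) : t ^ ((n : ℝ) + 1 - 1) = t ^ n := by
  rw [add_sub_cancel_right, rpow_natCast]

lemma upperIncGamma_natCast {n : ℕ} (hn : 0 < n) {x : ℝ} (hx : 0 ≤ x) :
    upperIncGamma n x = Gamma n * erlangTail n x := by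
  obtain ⟨k, rfl⟩ := Nat.exists_eq_add_of_lt hn
  simp only [zero_add, upperIncGamma, Nat.cast_add_one, rpow_natCast_add_one_sub_one,
    Gamma_nat_eq_factorial]
  exact (integrableOn_Ioi_pow_mul_exp_neg_and_integral k hx).2

lemma integral_Ioi_pow_mul_exp_neg_mul (n : ℕ) {β : ℝ} (hβ : 0 < β) (a : ℝ) :
    ∫ y in Ioi a, y ^ n * exp (-(β * y)) = upperIncGamma (n + 1) (β * a) * (β ^ (n + 1))⁻¹ := by
  have h := integral_comp_mul_left_Ioi (fun t => t ^ n * exp (-t)) a hβ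
  simp only [mul_pow, mul_assoc, integral_const_mul, smul_eq_mul] at h
  rw [upperIncGamma]
  simp only [rpow_natCast_add_one_sub_one]
  rw [← mul_right_inj' (pow_ne_zero n hβ.ne'), h]
  field_simp
  ring

lemma integral_pow_mul_exp_neg_mul (n : ℕ) {β : ℝ} (hβ : 0 < β) (Δ : ℝ) :
    ∫ y in 0..Δ, y ^ n * exp (-(β * y)) = lowerIncGamma (n + 1) (β * Δ) * (β ^ (n + 1))⁻¹ := by
  have h := intervalIntegral.integral_comp_mul_left (fun t => t ^ n * exp (-t)) hβ.ne'
    (a := 0) (b := Δ)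
  simp only [mul_pow, mul_assoc, intervalIntegral.integral_const_mul, smul_eq_mul,
    mul_zero] at h
  rw [lowerIncGamma]
  simp only [rpow_natCast_add_one_sub_one]
  rw [← mul_right_inj' (pow_ne_zero n hβ.ne'), h]
  field_simp
  ring

lemma integrableOn_Ioi_pow_mul_exp_neg_mul (n : ℕ) {β : ℝ} (hβ : 0 < β) {a : ℝ} (ha : 0 ≤ a) :
    IntegrableOn (fun y => y ^ n * exp (-(β * y))) (Ioi a) := by
  have h := ((integrableOn_Ioi_comp_mul_left_iff (fun t => t ^ n * exp (-t)) a hβ).2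
    (integrableOn_Ioi_pow_mul_exp_neg_and_integral n (by positivity)).1).const_mul (β ^ n)⁻¹
  refine IntegrableOn.congr_fun h (fun y _ => ?_) measurableSet_Ioi
  field_simp
  ring

lemma lowerIncGamma_mul_inv_pow_mem_Icc (n : ℕ) {r : ℝ} (hr : 0 < r) {Δ : ℝ} (hΔ : 0 ≤ Δ) :
    lowerIncGamma (n + 1) (r * Δ) * (r ^ (n + 1))⁻¹ ∈ Icc 0 (Δ ^ (n + 1)) := by
  rw [← integral_pow_mul_exp_neg_mul n hr]
  have hbound : ∀ y ∈ uIoc 0 Δ, ‖y ^ n * exp (-(r * y))‖ ≤ Δ ^ n := fun y hy => by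
    rw [uIoc_of_le hΔ] at hy
    have hry : exp (-(r * y)) ≤ 1 := exp_le_one_iff.2 (by nlinarith [hy.1])
    rw [norm_of_nonneg (by positivity [hy.1.le])]
    calc y ^ n * exp (-(r * y)) ≤ y ^ n * 1 := by gcongr; positivity [hy.1.le]
      _ ≤ Δ ^ n := by rw [mul_one]; exact pow_le_pow_left₀ hy.1.le hy.2 n
  refine ⟨intervalIntegral.integral_nonneg hΔ fun y hy => by positivity [hy.1], ?_⟩
  have h := intervalIntegral.norm_integral_le_of_norm_le_const hbound
  rw [sub_zero, abs_of_nonneg hΔ, ← pow_succ] at h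
  exact (le_abs_self _).trans h

lemma summable_abs_lowerIncGamma_series (j : ℕ) {r : ℝ} (hr : 0 < r) (c : ℝ) {Δ : ℝ}
    (hΔ : 0 ≤ Δ) :
    Summable fun s : ℕ =>
      |c ^ s / s ! * lowerIncGamma ((j + s : ℕ) + 1) (r * Δ) * (r ^ (j + s + 1))⁻¹| := by
  refine .of_nonneg_of_le (fun s => abs_nonneg _) (fun s => ?_)
    ((summable_pow_div_factorial (|c| * Δ)).mul_left (Δ ^ (j + 1)))
  obtain ⟨h0, hle⟩ := lowerIncGamma_mul_inv_pow_mem_Icc (j + s) hr hΔ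
  rw [mul_assoc, abs_mul, abs_of_nonneg h0, abs_div, abs_pow, Nat.abs_cast]
  calc |c| ^ s / s ! * (lowerIncGamma ((j + s : ℕ) + 1) (r * Δ) * (r ^ (j + s + 1))⁻¹)
      ≤ |c| ^ s / s ! * Δ ^ (j + s + 1) := by gcongr
    _ = Δ ^ (j + 1) * ((|c| * Δ) ^ s / s !) := by ring

lemma integral_Ioc_pow_mul_exp_neg_mul_mul_exp (j : ℕ) {r : ℝ} (hr : 0 < r) (c : ℝ) {Δ : ℝ}
    (hΔ : 0 ≤ Δ) :
    ∫ y in Ioc 0 Δ, y ^ j * exp (-(r * y)) * exp (c * y) =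
      ∑' s : ℕ, c ^ s / s ! * lowerIncGamma ((j + s : ℕ) + 1) (r * Δ) * (r ^ (j + s + 1))⁻¹ := by
  set F : ℕ → ℝ → ℝ := fun s y => c ^ s / s ! * (y ^ (j + s) * exp (-(r * y)))
  have hF : ∀ s, ∫ y in Ioc 0 Δ, F s y =
      c ^ s / s ! * lowerIncGamma ((j + s : ℕ) + 1) (r * Δ) * (r ^ (j + s + 1))⁻¹ := fun s => by
    rw [integral_const_mul, ← intervalIntegral.integral_of_le hΔ,
      integral_pow_mul_exp_neg_mul _ hr, mul_assoc]
  have hF_norm : ∀ s, ∫ y in Ioc 0 Δ, ‖F s y‖ =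
      |c ^ s / s ! * lowerIncGamma ((j + s : ℕ) + 1) (r * Δ) * (r ^ (j + s + 1))⁻¹| := fun s => by
    have hg : ∀ y ∈ Ioc 0 Δ, ‖F s y‖ = |c ^ s / s !| * (y ^ (j + s) * exp (-(r * y))) :=
      fun y hy => by rw [norm_mul, norm_eq_abs, norm_of_nonneg (by positivity [hy.1])]
    rw [setIntegral_congr_fun measurableSet_Ioc hg, integral_const_mul,
      ← intervalIntegral.integral_of_le hΔ, integral_pow_mul_exp_neg_mul _ hr, mul_assoc, abs_mul,
      abs_of_nonneg (lowerIncGamma_mul_inv_pow_mem_Icc _ hr hΔ).1]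
  have hF_int : ∀ s, Integrable (F s) (volume.restrict (Ioc 0 Δ)) := fun s =>
    Continuous.integrableOn_Ioc (by fun_prop)
  have hexp : ∀ y, y ^ j * exp (-(r * y)) * exp (c * y) = ∑' s, F s y := fun y => by
    have h := NormedSpace.expSeries_div_hasSum_exp (c * y)
    rw [← exp_eq_exp_ℝ] at h
    rw [← h.tsum_eq, ← tsum_mul_left]
    refine tsum_congr fun s => ?_
    simp only [F]; ring
  simp_rw [hexp, ← hF]
  exact (integral_tsum_of_summable_integral_norm hF_int
    ((summable_abs_lowerIncGamma_series j hr c hΔ).congr fun s => (hF_norm s).symm)).symm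

lemma gammaPDFReal_natCast {n : ℕ} (hn : 0 < n) (r : ℝ) {y : ℝ} (hy : 0 ≤ y) :
    gammaPDFReal n r y = r ^ n / Gamma n * y ^ (n - 1) * exp (-(r * y)) := by
  rw [gammaPDFReal, if_pos hy, ← Nat.cast_pred hn, rpow_natCast, rpow_natCast]

lemma integrable_gammaPDFReal {a r : ℝ} (ha : 0 < a) (hr : 0 < r) :
    Integrable (gammaPDFReal a r) :=
  ⟨(measurable_gammaPDFReal a r).aestronglyMeasurable,
    (hasFiniteIntegral_iff_ofReal (ae_of_all _ (gammaPDFReal_nonneg ha hr))).2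
      ((lintegral_gammaPDF_eq_one ha hr).trans_lt ENNReal.one_lt_top)⟩

lemma gammaMeasure_real_Ioi_natCast {n : ℕ} (hn : 0 < n) {r : ℝ} (hr : 0 < r) {x : ℝ}
    (hx : 0 ≤ x) : (gammaMeasure n r).real (Ioi x) = erlangTail n (r * x) := by
  have hpdf : ∀ y ∈ Ioi x, gammaPDFReal n r y = r ^ n / Gamma n * (y ^ (n - 1) * exp (-(r * y))) :=
    fun y hy => by rw [gammaPDFReal_natCast hn r (hx.trans hy.out.le), mul_assoc]
  rw [measureReal_def, gammaMeasure, withDensity_apply _ measurableSet_Ioi]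
  unfold gammaPDF
  rw [← integral_eq_lintegral_of_nonneg_ae (ae_of_all _ (gammaPDFReal_nonneg (by positivity) hr))
      (measurable_gammaPDFReal _ _).aestronglyMeasurable,
    setIntegral_congr_fun measurableSet_Ioi hpdf, integral_const_mul,
    integral_Ioi_pow_mul_exp_neg_mul _ hr, Nat.cast_pred hn, sub_add_cancel,
    Nat.sub_add_cancel hn, upperIncGamma_natCast hn (by positivity)]
  have : Gamma n ≠ 0 := (Gamma_pos_of_pos (by positivity)).ne'
  field_simp

lemma Measurable.measure_Ioi_comp (μ : Measure ℝ) {t : ℝ → ℝ} (ht : Measurable t) :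
    Measurable fun y => μ (Ioi (t y)) :=
  (Antitone.measurable fun _ _ hab => measure_mono (Set.Ioi_subset_Ioi hab)).comp ht

lemma measureReal_prod_withDensity_setOf_lt {μ : Measure ℝ} [IsFiniteMeasure μ] {f t : ℝ → ℝ}
    (hf : Measurable f) (hf0 : ∀ y, 0 ≤ f y) (ht : Measurable t) :
    (μ.prod (volume.withDensity fun y => ENNReal.ofReal (f y))).real {p | t p.2 < p.1} =
      ∫ y, f y * μ.real (Ioi (t y)) := by
  have htail := ht.measure_Ioi_comp μ
  have hS : MeasurableSet {p : ℝ × ℝ | t p.2 < p.1} :=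
    measurableSet_lt (ht.comp measurable_snd) measurable_fst
  rw [measureReal_def, Measure.prod_apply_symm hS]
  change (∫⁻ y, μ (Ioi (t y)) ∂_).toReal = _
  rw [lintegral_withDensity_eq_lintegral_mul _ hf.ennreal_ofReal htail,
    integral_eq_lintegral_of_nonneg_ae
      (ae_of_all _ fun y => mul_nonneg (hf0 y) measureReal_nonneg)
      (hf.mul htail.ennreal_toReal).aestronglyMeasurable]
  congr 1
  refine lintegral_congr fun y => ?_
  rw [ENNReal.ofReal_mul (hf0 y), measureReal_def, ENNReal.ofReal_toReal (measure_ne_top _ _)]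
  rfl

lemma Integrable.mul_measureReal_Ioi {μ : Measure ℝ} [IsFiniteMeasure μ] {f t : ℝ → ℝ}
    (hf : Integrable f) (ht : Measurable t) :
    Integrable fun y => f y * μ.real (Ioi (t y)) :=
  hf.mul_bdd (c := μ.real univ) (ht.measure_Ioi_comp μ).ennreal_toReal.aestronglyMeasurable
    (ae_of_all _ fun y => by
      simpa [abs_of_nonneg measureReal_nonneg] using measureReal_mono (subset_univ (Ioi (t y))))

lemma measureReal_setOf_lt_eq_integral {Ω : Type*} [MeasurableSpace Ω] {μ : Measure Ω}
    [IsFiniteMeasure μ] {X Y : Ω → ℝ} (hX : Measurable X) (hY : Measurable Y)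
    (hXY : IndepFun X Y μ) {f t : ℝ → ℝ} (hf : Measurable f) (hf0 : ∀ y, 0 ≤ f y)
    (hYf : μ.map Y = volume.withDensity fun y => ENNReal.ofReal (f y)) (ht : Measurable t) :
    μ.real {ω | t (Y ω) < X ω} = ∫ y, f y * (μ.map X).real (Ioi (t y)) := by
  have hS : MeasurableSet {p : ℝ × ℝ | t p.2 < p.1} :=
    measurableSet_lt (ht.comp measurable_snd) measurable_fst
  rw [measureReal_def, show {ω | t (Y ω) < X ω} = (fun ω => (X ω, Y ω)) ⁻¹' {p | t p.2 < p.1}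
      from rfl, ← Measure.map_apply (hX.prodMk hY) hS,
    (indepFun_iff_map_prod_eq_prod_map_map hX.aemeasurable hY.aemeasurable).1 hXY, hYf,
    ← measureReal_def]
  exact measureReal_prod_withDensity_setOf_lt hf hf0 ht

lemma integral_Ioi_gammaPDFReal_mul_erlangTail {n m : ℕ} (hn : 0 < n) {r B : ℝ} (hr : 0 < r)
    (hB : 0 < B) (c : ℝ) {a : ℝ} (ha : 0 ≤ a) :
    ∫ y in Ioi a, gammaPDFReal n r y * erlangTail m (B * (y - c)) =
      ∑ k ∈ range m, 1 / k ! * B ^ k * ∑ q ∈ range (k + 1), (k.choose q : ℝ) * (-c) ^ (k - q) *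
        exp (B * c) * (r ^ n / Gamma n) * upperIncGamma (n + q) ((r + B) * a) *
        ((r + B) ^ (n + q))⁻¹ := by
  set C : ℕ → ℕ → ℝ := fun k q =>
    1 / k ! * B ^ k * ((k.choose q : ℝ) * (-c) ^ (k - q) * exp (B * c) * (r ^ n / Gamma n))
  have hexpand : EqOn (fun y => gammaPDFReal n r y * erlangTail m (B * (y - c)))
      (fun y => ∑ k ∈ range m, ∑ q ∈ range (k + 1),
        C k q * (y ^ (n - 1 + q) * exp (-((r + B) * y)))) (Ioi a) := by
    intro y hy
    have hexp : exp (-(B * (y - c))) * exp (-(r * y)) = exp (B * c) * exp (-((r + B) * y)) := by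
      rw [← exp_add, ← exp_add]; ring_nf
    simp only [gammaPDFReal_natCast hn r (ha.trans hy.out.le), erlangTail, mul_pow,
      sub_eq_add_neg y, add_pow, mul_sum, sum_div]
    refine sum_congr rfl fun k _ => sum_congr rfl fun q _ => ?_
    rw [pow_add]
    linear_combination (r ^ n / Gamma n * y ^ (n - 1) * B ^ k * y ^ q * (-c) ^ (k - q) *
      (k.choose q : ℝ) / k !) * hexp
  have hrB : 0 < r + B := add_pos hr hB
  have hint : ∀ k q, IntegrableOn (fun y => C k q * (y ^ (n - 1 + q) * exp (-((r + B) * y))))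
      (Ioi a) := fun k q => (integrableOn_Ioi_pow_mul_exp_neg_mul _ hrB ha).const_mul _
  rw [setIntegral_congr_fun measurableSet_Ioi hexpand,
    integral_finsetSum _ fun k _ => integrable_finsetSum _ fun q _ => hint k q]
  refine sum_congr rfl fun k _ => ?_
  rw [integral_finsetSum _ fun q _ => hint k q, mul_sum]
  refine sum_congr rfl fun q _ => ?_
  have hcast : ((n - 1 + q : ℕ) : ℝ) + 1 = n + q := by rw [Nat.cast_add, Nat.cast_pred hn]; ring
  rw [integral_const_mul, integral_Ioi_pow_mul_exp_neg_mul _ hrB, hcast,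
    show n - 1 + q + 1 = n + q by omega]
  ring

lemma summable_and_integral_Iic_gammaPDFReal_mul_erlangTail {n m : ℕ} (hn : 0 < n) {r : ℝ}
    (hr : 0 < r) (G P d : ℝ) {Δ : ℝ} (hΔ : 0 ≤ Δ) :
    (∀ p ∈ range m, ∀ k ∈ range (p + 1), Summable fun s : ℕ =>
      |(G * d) ^ s / s ! * lowerIncGamma ((n : ℝ) + p + s - k) (r * Δ) *
        (r ^ (n + p + s - k))⁻¹|) ∧
    ∫ y in Iic Δ, gammaPDFReal n r y * erlangTail m (G * (P - d * y)) =
      ∑ p ∈ range m, 1 / p ! * G ^ p * ∑ k ∈ range (p + 1), (p.choose k : ℝ) * P ^ k *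
        (-d) ^ (p - k) * (r ^ n / Gamma n) * exp (-(G * P)) *
        ∑' s : ℕ, (G * d) ^ s / s ! * lowerIncGamma ((n : ℝ) + p + s - k) (r * Δ) *
          (r ^ (n + p + s - k))⁻¹ := by
  have hreindex : ∀ p k, k ∈ range (p + 1) → ∀ s : ℕ,
      (G * d) ^ s / s ! * lowerIncGamma ((n : ℝ) + p + s - k) (r * Δ) * (r ^ (n + p + s - k))⁻¹ =
        (G * d) ^ s / s ! * lowerIncGamma ((n - 1 + (p - k) + s : ℕ) + 1) (r * Δ) *
          (r ^ (n - 1 + (p - k) + s + 1))⁻¹ := fun p k hk s => by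
    have hkp : k ≤ p := Nat.lt_succ_iff.mp (mem_range.mp hk)
    have hcast : ∀ s : ℕ, (n : ℝ) + p + s - k = ((n - 1 + (p - k) + s : ℕ) : ℝ) + 1 := fun s => by
      rw [Nat.cast_add, Nat.cast_add, Nat.cast_sub hkp, Nat.cast_pred hn]
      ring
    rw [hcast, show n + p + s - k = n - 1 + (p - k) + s + 1 by omega]
  refine ⟨fun p _ k hk => by simpa only [hreindex p k hk] using
    summable_abs_lowerIncGamma_series _ hr _ hΔ, ?_⟩
  set D : ℕ → ℕ → ℝ := fun p k => 1 / p ! * G ^ p *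
    ((p.choose k : ℝ) * P ^ k * (-d) ^ (p - k) * (r ^ n / Gamma n) * exp (-(G * P)))
  have hexpand : EqOn (fun y => gammaPDFReal n r y * erlangTail m (G * (P - d * y)))
      (fun y => ∑ p ∈ range m, ∑ k ∈ range (p + 1),
        D p k * (y ^ (n - 1 + (p - k)) * exp (-(r * y)) * exp (G * d * y))) (Ioc 0 Δ) := by
    intro y hy
    have hexp : exp (-(G * (P - d * y))) = exp (-(G * P)) * exp (G * d * y) := by
      rw [← exp_add]; ring_nf
    have hbinom : ∀ p : ℕ, (P - d * y) ^ p =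
        ∑ k ∈ range (p + 1), P ^ k * (-d * y) ^ (p - k) * (p.choose k : ℝ) := fun p => by
      rw [sub_eq_add_neg, ← neg_mul, add_pow]
    simp only [gammaPDFReal_natCast hn r hy.1.le, erlangTail, mul_pow, hbinom, mul_sum, sum_div]
    refine sum_congr rfl fun p _ => sum_congr rfl fun k _ => ?_
    rw [pow_add]
    linear_combination (r ^ n / Gamma n * y ^ (n - 1) * exp (-(r * y)) * G ^ p * P ^ k *
      ((-d) ^ (p - k) * y ^ (p - k)) * (p.choose k : ℝ) / p !) * hexp
  have hint : ∀ p k, IntegrableOn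
      (fun y => D p k * (y ^ (n - 1 + (p - k)) * exp (-(r * y)) * exp (G * d * y))) (Ioc 0 Δ) :=
    fun p k => Continuous.integrableOn_Ioc (by fun_prop)
  have hneg : ∀ y ∈ Iic Δ \ Icc 0 Δ, gammaPDFReal n r y * erlangTail m (G * (P - d * y)) = 0 :=
    fun y hy => by
      have hy0 : y < 0 := by
        by_contra! h
        exact hy.2 ⟨h, hy.1⟩
      rw [gammaPDFReal, if_neg hy0.not_ge, zero_mul]
  rw [setIntegral_eq_of_subset_of_forall_sdiff_eq_zero measurableSet_Iic Icc_subset_Iic_self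
      hneg, integral_Icc_eq_integral_Ioc, setIntegral_congr_fun measurableSet_Ioc hexpand,
    integral_finsetSum _ fun p _ => integrable_finsetSum _ fun k _ => hint p k]
  refine sum_congr rfl fun p _ => ?_
  rw [integral_finsetSum _ fun k _ => hint p k, mul_sum]
  refine sum_congr rfl fun k hk => ?_
  rw [integral_const_mul, integral_Ioc_pow_mul_exp_neg_mul_mul_exp _ hr _ hΔ]
  simp only [D, hreindex p k hk]
  ring

section Threshold

variable {Px Py Pth Λ1 Λ2 : ℝ}

lemma max_div_lt_iff (hPx : 0 < Px) (x y : ℝ) :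
    max ((y - Λ1) / Λ2) ((Pth - Py * y) / Px) < x ↔ x > (y - Λ1) / Λ2 ∧ Px * x + Py * y > Pth := by
  rw [max_lt_iff, div_lt_iff₀ hPx]
  constructor <;> rintro ⟨h1, h2⟩ <;> exact ⟨h1, by linarith⟩

lemma max_div_nonneg (hPx : 0 < Px) (hPy : 0 < Py) (hΛ2 : 0 < Λ2) (hΛ1Pth : Py * Λ1 ≤ Pth)
    (y : ℝ) : 0 ≤ max ((y - Λ1) / Λ2) ((Pth - Py * y) / Px) := by
  rcases le_total Λ1 y with h | h
  · exact le_max_of_le_left (div_nonneg (by linarith) hΛ2.le)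
  · exact le_max_of_le_right (div_nonneg (by nlinarith) hPx.le)

lemma max_div_eq_left_of_lt (hPx : 0 < Px) (hPy : 0 < Py) (hΛ2 : 0 < Λ2) {Δ y : ℝ}
    (hΔ : Δ = (Λ2 * Pth + Λ1 * Px) / (Px + Py * Λ2)) (hy : Δ < y) :
    max ((y - Λ1) / Λ2) ((Pth - Py * y) / Px) = (y - Λ1) / Λ2 := by
  rw [hΔ, div_lt_iff₀ (by positivity)] at hy
  rw [max_eq_left_iff, div_le_div_iff₀ hPx hΛ2]
  linarith

lemma max_div_eq_right_of_le (hPx : 0 < Px) (hPy : 0 < Py) (hΛ2 : 0 < Λ2) {Δ y : ℝ}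
    (hΔ : Δ = (Λ2 * Pth + Λ1 * Px) / (Px + Py * Λ2)) (hy : y ≤ Δ) :
    max ((y - Λ1) / Λ2) ((Pth - Py * y) / Px) = (Pth - Py * y) / Px := by
  rw [hΔ, le_div_iff₀ (by positivity)] at hy
  rw [max_eq_right_iff, div_le_div_iff₀ hΛ2 hPx]
  linarith

lemma integral_gammaPDFReal_mul_gammaMeasure_real_Ioi_max {n m : ℕ} (hn : 0 < n) (hm : 0 < m)
    {r ρ : ℝ} (hr : 0 < r) (hρ : 0 < ρ) (hPx : 0 < Px) (hPy : 0 < Py) (hΛ2 : 0 < Λ2)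
    (hΛ1Pth : Py * Λ1 ≤ Pth) {Δ : ℝ} (hΔ : Δ = (Λ2 * Pth + Λ1 * Px) / (Px + Py * Λ2)) :
    ∫ y, gammaPDFReal n r y *
        (gammaMeasure m ρ).real (Ioi (max ((y - Λ1) / Λ2) ((Pth - Py * y) / Px))) =
      (∫ y in Iic Δ, gammaPDFReal n r y * erlangTail m (ρ / Px * (Pth - Py * y))) +
        ∫ y in Ioi Δ, gammaPDFReal n r y * erlangTail m (ρ / Λ2 * (y - Λ1)) := by
  have : IsProbabilityMeasure (gammaMeasure m ρ) :=
    isProbabilityMeasure_gammaMeasure (by positivity) hρ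
  have hint := Integrable.mul_measureReal_Ioi (integrable_gammaPDFReal (a := n) (by positivity) hr)
    (μ := gammaMeasure m ρ) (t := fun y => max ((y - Λ1) / Λ2) ((Pth - Py * y) / Px))
    (by fun_prop)
  rw [← intervalIntegral.integral_Iic_add_Ioi (b := Δ) hint.integrableOn hint.integrableOn]
  have htail : ∀ y, (gammaMeasure m ρ).real (Ioi (max ((y - Λ1) / Λ2) ((Pth - Py * y) / Px))) =
      erlangTail m (ρ * max ((y - Λ1) / Λ2) ((Pth - Py * y) / Px)) := fun y =>
    gammaMeasure_real_Ioi_natCast hm hρ (max_div_nonneg hPx hPy hΛ2 hΛ1Pth y)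
  congr 1
  · refine setIntegral_congr_fun measurableSet_Iic fun y hy => ?_
    rw [htail, max_div_eq_right_of_le hPx hPy hΛ2 hΔ hy, mul_div_assoc', div_mul_eq_mul_div]
  · refine setIntegral_congr_fun measurableSet_Ioi fun y hy => ?_
    rw [htail, max_div_eq_left_of_lt hPx hPy hΛ2 hΔ hy, mul_div_assoc', div_mul_eq_mul_div]

end Threshold

end

/-- Lemma 2 of the paper: closed-form CDF of the saturated-regime relay SNR
(written as the event `X > (Y − Λ1)/Λ2`) jointly with the saturation event
`Px·X + Py·Y > Pth` of the nonlinear energy harvester, where `X` and `Y` are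
independent Gamma random variables (Nakagami-m fading with integer shapes);
the inner infinite series converges absolutely. -/
theorem stmt_9 {Ω : Type*} [MeasurableSpace Ω]
    (ℙ : Measure Ω) [IsProbabilityMeasure ℙ]
    (X Y : Ω → ℝ) (hmX : Measurable X) (hmY : Measurable Y)
    (hindep : ProbabilityTheory.IndepFun X Y ℙ)
    (mX mY : ℕ) (hmX1 : 0 < mX) (hmY1 : 0 < mY)
    (ΩX ΩY : ℝ) (hΩX : 0 < ΩX) (hΩY : 0 < ΩY)
    (hXgamma : Measure.map X ℙ = ProbabilityTheory.gammaMeasure mX (mX / ΩX))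
    (hYgamma : Measure.map Y ℙ = ProbabilityTheory.gammaMeasure mY (mY / ΩY))
    (Px Py Pth Λ1 Λ2 : ℝ)
    (hPx : 0 < Px) (hPy : 0 < Py) (hPth : 0 < Pth) (hΛ1 : 0 < Λ1) (hΛ2 : 0 < Λ2)
    (Δ2 : ℝ) (hΔ2 : Δ2 = (Λ2 * Pth + Λ1 * Px) / (Px + Py * Λ2))
    (hΛ1Pth : Py * Λ1 ≤ Pth) :
    (∀ p ∈ range mX, ∀ n ∈ range (p + 1),
      Summable (fun s : ℕ =>
        |((mX * Py / (ΩX * Px) : ℝ) ^ s / (Nat.factorial s : ℝ)) *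
          lowerIncGamma ((mY : ℝ) + p + s - n) ((mY / ΩY) * Δ2) *
          (((mY / ΩY : ℝ)) ^ (mY + p + s - n))⁻¹|)) ∧
    (ℙ {ω | X ω > (Y ω - Λ1) / Λ2 ∧ Px * X ω + Py * Y ω > Pth}).toReal =
      (∑ k ∈ range mX, (1 / (Nat.factorial k : ℝ)) * (mX / (ΩX * Λ2) : ℝ) ^ k *
        ∑ q ∈ range (k + 1), (Nat.choose k q : ℝ) * (-Λ1) ^ (k - q) *
          Real.exp (mX * Λ1 / (ΩX * Λ2)) *
          ((mY / ΩY : ℝ) ^ mY / Real.Gamma mY) *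
          upperIncGamma ((mY : ℝ) + q) ((mY / ΩY + mX / (ΩX * Λ2)) * Δ2) *
          (((mY / ΩY + mX / (ΩX * Λ2) : ℝ)) ^ (mY + q))⁻¹)
      + ∑ p ∈ range mX, (1 / (Nat.factorial p : ℝ)) * (mX / (ΩX * Px) : ℝ) ^ p *
          ∑ n ∈ range (p + 1), (Nat.choose p n : ℝ) * Pth ^ n * (-Py) ^ (p - n) *
            ((mY / ΩY : ℝ) ^ mY / Real.Gamma mY) *
            Real.exp (-(mX * Pth / (ΩX * Px))) *
            ∑' s : ℕ, ((mX * Py / (ΩX * Px) : ℝ) ^ s / (Nat.factorial s : ℝ)) *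
              lowerIncGamma ((mY : ℝ) + p + s - n) ((mY / ΩY) * Δ2) *
              (((mY / ΩY : ℝ)) ^ (mY + p + s - n))⁻¹ := by
  have hΔ0 : 0 ≤ Δ2 := by rw [hΔ2]; positivity
  have hevent : {ω | X ω > (Y ω - Λ1) / Λ2 ∧ Px * X ω + Py * Y ω > Pth} =
      {ω | max ((Y ω - Λ1) / Λ2) ((Pth - Py * Y ω) / Px) < X ω} := by
    ext ω
    exact (max_div_lt_iff hPx _ _).symm
  rw [show (mX : ℝ) * Λ1 / (ΩX * Λ2) = mX / ΩX / Λ2 * Λ1 by ring,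
    show (mX : ℝ) * Pth / (ΩX * Px) = mX / ΩX / Px * Pth by ring,
    show (mX : ℝ) * Py / (ΩX * Px) = mX / ΩX / Px * Py by ring,
    ← div_div (mX : ℝ) ΩX Px, ← div_div (mX : ℝ) ΩX Λ2]
  obtain ⟨hsum, hsat⟩ := summable_and_integral_Iic_gammaPDFReal_mul_erlangTail (m := mX) hmY1
    (r := mY / ΩY) (by positivity) (mX / ΩX / Px) Pth Py hΔ0
  refine ⟨hsum, ?_⟩
  rw [← measureReal_def, hevent, measureReal_setOf_lt_eq_integral hmX hmY hindep
      (t := fun y => max ((y - Λ1) / Λ2) ((Pth - Py * y) / Px))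
      (ProbabilityTheory.measurable_gammaPDFReal _ _)
      (ProbabilityTheory.gammaPDFReal_nonneg (by positivity) (by positivity)) hYgamma (by fun_prop),
    hXgamma, integral_gammaPDFReal_mul_gammaMeasure_real_Ioi_max hmY1 hmX1 (r := mY / ΩY)
      (ρ := mX / ΩX) (by positivity) (by positivity) hPx hPy hΛ2 hΛ1Pth hΔ2, hsat,
    integral_Ioi_gammaPDFReal_mul_erlangTail hmY1 (r := mY / ΩY) (B := mX / ΩX / Λ2)
      (by positivity) (by positivity) Λ1 hΔ0, add_comm]
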